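/- arXiv:0912.5419 — 3 statements merged into one kernel-verified Lean document; each statement's English description precedes it below -/
import Mathlib

section
/- Let β ∈ [0,1] and let x = (a, ζ, θ) : ℝ → ℝ³ be a differentiable function satisfying for all t ∈ ℝ the system (5.1): a'(t) = -a(t) + β² sin²(ζ(t)) sin(θ(t)), ζ'(t) = sin²(ζ(t)), θ'(t) = a(t). Suppose |a(t)| ≤ 2 for all t ∈ ℝ and ζ(0) ∈ [0, π/2]. Then |a(0)| ≤ sin²(ζ(0)). -/
open Real Filter Set

/-! On `t ≤ 0` the orbit has `0 ≤ ζ t ≤ ζ 0 ≤ π/2`: `ζ` increases, and it cannot cross the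
equilibrium `0` because `sin² x ≤ |x|` makes `e^t ζ` decrease while `ζ ≤ 0`. Hence the forcing
term of `a' + a = β² sin² ζ sin θ` is bounded by `sin² (ζ 0)` on the past, and for a solution
bounded on the past, `e^t (a - M)` decreasing gives `a 0 - M ≤ e^T (a T - M) → 0` as `T → -∞`. -/

lemma sin_sq_le_abs (x : ℝ) : sin x ^ 2 ≤ |x| := by
  nlinarith [abs_sin_le_one x, abs_sin_le_abs (x := x), abs_nonneg (sin x), sq_abs (sin x)]

lemma antitoneOn_exp_mul_of_add_deriv_nonpos {f : ℝ → ℝ} {D : Set ℝ} (hD : Convex ℝ D)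
    (hf : Differentiable ℝ f) (h : ∀ t ∈ interior D, f t + deriv f t ≤ 0) :
    AntitoneOn (fun t => exp t * f t) D := by
  have hdiff : Differentiable ℝ (fun t => exp t * f t) := differentiable_exp.mul hf
  refine antitoneOn_of_deriv_nonpos hD hdiff.continuous.continuousOn
    hdiff.differentiableOn fun t ht => ?_
  rw [deriv_fun_mul (differentiable_exp t) (hf t), Real.deriv_exp]
  nlinarith [exp_pos t, h t ht]

lemma le_of_add_deriv_le {f : ℝ → ℝ} {u C M : ℝ} (hf : Differentiable ℝ f)
    (hC : ∀ t ≤ u, f t ≤ C) (hM : ∀ t < u, f t + deriv f t ≤ M) : f u ≤ M := by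
  have hanti : AntitoneOn (fun t => exp t * (f t - M)) (Iic u) := by
    refine antitoneOn_exp_mul_of_add_deriv_nonpos (convex_Iic u) (hf.sub_const M) fun t ht => ?_
    rw [interior_Iic] at ht
    rw [deriv_sub_const]
    linarith [hM t ht]
  have hlim : Tendsto (fun T => exp T * (C - M)) atBot (nhds 0) := by
    simpa using tendsto_exp_atBot.mul_const (C - M)
  have hpast : ∀ T ≤ u, exp u * (f u - M) ≤ exp T * (C - M) := fun T hT =>
    calc exp u * (f u - M) ≤ exp T * (f T - M) := hanti hT (le_refl u) hT
      _ ≤ exp T * (C - M) := by gcongr; exact hC T hT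
  have hu : exp u * (f u - M) ≤ 0 := ge_of_tendsto hlim (eventually_le_atBot u |>.mono hpast)
  nlinarith [exp_pos u]

lemma abs_le_of_abs_add_deriv_le {f : ℝ → ℝ} {u C M : ℝ} (hf : Differentiable ℝ f)
    (hC : ∀ t ≤ u, |f t| ≤ C) (hM : ∀ t < u, |f t + deriv f t| ≤ M) : |f u| ≤ M := by
  have hupper : f u ≤ M := le_of_add_deriv_le hf (fun t ht => (le_abs_self _).trans (hC t ht))
    fun t ht => (le_abs_self _).trans (hM t ht)
  have hlower : (-f) u ≤ M := le_of_add_deriv_le hf.neg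
    (fun t ht => (neg_le_abs _).trans (hC t ht)) fun t ht => by
      rw [deriv.neg, Pi.neg_apply, ← neg_add]
      exact (neg_le_abs _).trans (hM t ht)
  exact abs_le.2 ⟨neg_le.1 hlower, hupper⟩

lemma monotone_of_deriv_eq_sin_sq {ζ : ℝ → ℝ} (hζ : Differentiable ℝ ζ)
    (hdζ : ∀ t, deriv ζ t = sin (ζ t) ^ 2) : Monotone ζ :=
  monotone_of_deriv_nonneg hζ fun t => hdζ t ▸ sq_nonneg _

lemma nonneg_of_deriv_eq_sin_sq {ζ : ℝ → ℝ} (hζ : Differentiable ℝ ζ)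
    (hdζ : ∀ t, deriv ζ t = sin (ζ t) ^ 2) {u : ℝ} (hu : 0 ≤ ζ u) (t : ℝ) : 0 ≤ ζ t := by
  have hmono := monotone_of_deriv_eq_sin_sq hζ hdζ
  by_contra! hneg
  have htu : t ≤ u := le_of_not_ge fun hut => hneg.not_ge (hu.trans (hmono hut))
  obtain ⟨s, hs, hζs⟩ : ∃ s ∈ Icc t u, ζ s = 0 :=
    intermediate_value_Icc htu hζ.continuous.continuousOn ⟨hneg.le, hu⟩
  have hanti : AntitoneOn (fun r => exp r * ζ r) (Icc t s) := by
    refine antitoneOn_exp_mul_of_add_deriv_nonpos (convex_Icc t s) hζ fun r hr => ?_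
    rw [interior_Icc] at hr
    have hζr : ζ r ≤ 0 := hζs ▸ hmono hr.2.le
    have := sin_sq_le_abs (ζ r)
    rw [abs_of_nonpos hζr] at this
    linarith [hdζ r]
  have hts : exp s * ζ s ≤ exp t * ζ t :=
    hanti (left_mem_Icc.2 hs.1) (right_mem_Icc.2 hs.1) hs.1
  rw [hζs, mul_zero] at hts
  nlinarith [exp_pos t]

lemma sin_sq_le_sin_sq_of_deriv_eq_sin_sq {ζ : ℝ → ℝ} (hζ : Differentiable ℝ ζ)
    (hdζ : ∀ t, deriv ζ t = sin (ζ t) ^ 2) {u t : ℝ} (hu : ζ u ∈ Icc 0 (π / 2)) (ht : t ≤ u) :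
    sin (ζ t) ^ 2 ≤ sin (ζ u) ^ 2 := by
  have hζt : 0 ≤ ζ t := nonneg_of_deriv_eq_sin_sq hζ hdζ hu.1 t
  have hle : ζ t ≤ ζ u := monotone_of_deriv_eq_sin_sq hζ hdζ ht
  have hsin : 0 ≤ sin (ζ t) :=
    sin_nonneg_of_nonneg_of_le_pi hζt (by linarith [hu.2, pi_pos])
  gcongr
  exact sin_le_sin_of_le_of_le_pi_div_two (by linarith [pi_pos]) hu.2 hle

theorem stmt0_general (β : ℝ) (hβ : β ∈ Set.Icc (0 : ℝ) 1)
    (a ζ θ : ℝ → ℝ)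
    (ha : Differentiable ℝ a) (hζ : Differentiable ℝ ζ)
    (hda : ∀ t, deriv a t = -a t + β ^ 2 * sin (ζ t) ^ 2 * sin (θ t))
    (hdζ : ∀ t, deriv ζ t = sin (ζ t) ^ 2)
    (hbound : ∀ t, |a t| ≤ 2)
    (hζ0 : ζ 0 ∈ Set.Icc (0 : ℝ) (π / 2)) :
    |a 0| ≤ sin (ζ 0) ^ 2 := by
  refine abs_le_of_abs_add_deriv_le ha (fun t _ => hbound t) fun t ht => ?_
  have hβ2 : β ^ 2 ≤ 1 := by nlinarith [hβ.1, hβ.2]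
  rw [hda, add_neg_cancel_left, abs_mul, abs_mul, abs_of_nonneg (sq_nonneg β),
    abs_of_nonneg (sq_nonneg _)]
  calc β ^ 2 * sin (ζ t) ^ 2 * |sin (θ t)| ≤ 1 * sin (ζ t) ^ 2 * 1 := by
        gcongr
        exact abs_sin_le_one _
    _ ≤ sin (ζ 0) ^ 2 := by
        simpa using sin_sq_le_sin_sq_of_deriv_eq_sin_sq hζ hdζ hζ0 ht.le

/-- Property (1) of Lemma 5.1: any full orbit of the system (5.1) with
`a`-component bounded by 2 and `ζ 0 ∈ [0, π/2]` satisfies `|a 0| ≤ sin² (ζ 0)`. -/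
theorem stmt0 (β : ℝ) (hβ : β ∈ Set.Icc (0 : ℝ) 1)
    (a ζ θ : ℝ → ℝ)
    (ha : Differentiable ℝ a) (hζ : Differentiable ℝ ζ) (hθ : Differentiable ℝ θ)
    (hda : ∀ t, deriv a t = -a t + β ^ 2 * sin (ζ t) ^ 2 * sin (θ t))
    (hdζ : ∀ t, deriv ζ t = sin (ζ t) ^ 2)
    (hdθ : ∀ t, deriv θ t = a t)
    (hbound : ∀ t, |a t| ≤ 2)
    (hζ0 : ζ 0 ∈ Set.Icc (0 : ℝ) (π / 2)) :
    |a 0| ≤ sin (ζ 0) ^ 2 :=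
  stmt0_general β hβ a ζ θ ha hζ hda hdζ hbound hζ0
end

section
/- Let β ∈ [0,1] and let x = (a, ζ, θ) : ℝ → ℝ³ be a differentiable function satisfying for all t ∈ ℝ the system (5.1): a'(t) = -a(t) + β² sin²(ζ(t)) sin(θ(t)), ζ'(t) = sin²(ζ(t)), θ'(t) = a(t). Suppose |a(t)| ≤ 2 for all t ∈ ℝ and ζ(0) ∈ [0, π). Then there exists θ* ∈ ℝ such that (a(t), ζ(t), θ(t)) → (0, 0, θ*) as t → -∞. -/
/-!
`ζ` is nondecreasing and, since `0` is an equilibrium of `ζ' = sin² ζ`, stays nonnegative; its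
limit at `-∞` must then be a zero of `sin²` in `[0, π)`, i.e. `0`. Hence the forcing term
`β² sin² ζ sin θ` tends to `0`, and `a' = -a + forcing` with `a` bounded gives `a → 0`. Finally
`(θ + a)'` is the forcing term, dominated by `(β² ζ)'`, so `θ + a` converges.
-/

open Real Filter Set Topology

lemma lipschitzWith_sin_sq : LipschitzWith 1 (fun x : ℝ => sin x ^ 2) := by
  refine lipschitzWith_of_nnnorm_deriv_le (by fun_prop) fun x => ?_
  have hderiv : deriv (fun x : ℝ => sin x ^ 2) x = sin (2 * x) := by
    rw [sin_two_mul, ((hasDerivAt_sin x).fun_pow 2).deriv]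
    ring
  rw [← NNReal.coe_le_coe, coe_nnnorm, hderiv, Real.norm_eq_abs, NNReal.coe_one]
  exact abs_sin_le_one _

lemma le_of_hasDerivAt_of_lipschitzWith {v f : ℝ → ℝ} {K : NNReal} {c t₀ : ℝ}
    (hv : LipschitzWith K v) (hc : v c = 0) (hf : ∀ t, HasDerivAt f (v (f t)) t)
    (h₀ : c ≤ f t₀) (t : ℝ) : c ≤ f t := by
  by_contra! ht
  have hcont : Continuous f := continuous_iff_continuousAt.2 fun t => (hf t).continuousAt
  obtain ⟨s, -, hs⟩ : c ∈ f '' uIcc t t₀ :=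
    intermediate_value_uIcc hcont.continuousOn (mem_uIcc.2 (Or.inl ⟨ht.le, h₀⟩))
  have hconst : f = fun _ => c :=
    ODE_solution_unique_univ (v := fun _ => v) (s := fun _ => univ) (t₀ := s)
      (fun _ => hv.lipschitzOnWith) (fun t => ⟨hf t, trivial⟩)
      (fun _ => ⟨hc ▸ hasDerivAt_const _ _, trivial⟩) hs
  exact ht.ne (congrFun hconst t)

lemma monotoneOn_Iic_of_hasDerivAt_nonneg {f f' : ℝ → ℝ} {T : ℝ}
    (hf : ∀ x, HasDerivAt f (f' x) x) (hf' : ∀ x < T, 0 ≤ f' x) : MonotoneOn f (Iic T) :=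
  monotoneOn_of_hasDerivWithinAt_nonneg (convex_Iic T)
    (fun x _ => (hf x).continuousAt.continuousWithinAt) (fun x _ => (hf x).hasDerivWithinAt)
    (by simpa only [interior_Iic, mem_Iio] using hf')

lemma nonpos_of_tendsto_atBot_of_tendsto_deriv {f f' : ℝ → ℝ} {L m : ℝ}
    (hf : ∀ t, HasDerivAt f (f' t) t) (hL : Tendsto f atBot (𝓝 L))
    (hm : Tendsto f' atBot (𝓝 m)) : m ≤ 0 := by
  by_contra! hm_pos
  obtain ⟨T, hT⟩ := eventually_atBot.1 (hm.eventually (eventually_gt_nhds (half_lt_self hm_pos)))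
  have hmono : MonotoneOn (fun t => f t - m / 2 * t) (Iic T) :=
    monotoneOn_Iic_of_hasDerivAt_nonneg (fun t => (hf t).sub ((hasDerivAt_id t).const_mul _))
      fun t ht => by simpa using (hT t ht.le).le
  have hlin : Tendsto (fun t => m / 2 * t + (f T - m / 2 * T)) atBot atBot :=
    tendsto_atBot_add_const_right _ _ (tendsto_id.const_mul_atBot (half_pos hm_pos))
  refine not_tendsto_nhds_of_tendsto_atBot (tendsto_atBot_mono' _ ?_ hlin) L hL
  filter_upwards [eventually_le_atBot T] with t ht
  have := hmono ht self_mem_Iic ht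
  dsimp only at this
  linarith

/-- The weight `exp` makes `ε - a` monotone on `(-∞, T]`, and boundedness of `a` makes the
weighted quantity vanish at `-∞`. -/
lemma le_of_hasDerivAt_eq_neg_add {a g : ℝ → ℝ} {M ε T : ℝ}
    (ha : ∀ t, HasDerivAt a (-a t + g t) t) (hM : ∀ t, a t ≤ M) (hg : ∀ t ≤ T, g t ≤ ε)
    {t : ℝ} (ht : t ≤ T) : a t ≤ ε := by
  have hmono : MonotoneOn (fun u => exp u * (ε - a u)) (Iic T) := by
    refine monotoneOn_Iic_of_hasDerivAt_nonneg
      (fun u => (hasDerivAt_exp u).mul ((hasDerivAt_const u ε).sub (ha u))) fun u hu => ?_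
    nlinarith [exp_pos u, hg u hu.le]
  have hlim : Tendsto (fun s => exp s * (ε - M)) atBot (𝓝 0) := by
    simpa using tendsto_exp_atBot.mul_const (ε - M)
  have hpos : 0 ≤ exp t * (ε - a t) := by
    refine le_of_tendsto hlim ?_
    filter_upwards [eventually_le_atBot t] with s hs
    calc exp s * (ε - M) ≤ exp s * (ε - a s) := by gcongr; exact hM s
      _ ≤ exp t * (ε - a t) := hmono (hs.trans ht) ht hs
  nlinarith [exp_pos t]

lemma tendsto_atBot_zero_of_hasDerivAt_eq_neg_add {a g : ℝ → ℝ} {M : ℝ}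
    (ha : ∀ t, HasDerivAt a (-a t + g t) t) (hM : ∀ t, |a t| ≤ M)
    (hg : Tendsto g atBot (𝓝 0)) : Tendsto a atBot (𝓝 0) := by
  rw [Metric.tendsto_nhds]
  intro ε hε
  obtain ⟨T, hT⟩ := eventually_atBot.1 ((Metric.tendsto_nhds.1 hg) (ε / 2) (half_pos hε))
  refine eventually_atBot.2 ⟨T, fun t ht => ?_⟩
  have hgT : ∀ u ≤ T, |g u| ≤ ε / 2 := fun u hu => by simpa using (hT u hu).le
  have hupper : a t ≤ ε / 2 :=
    le_of_hasDerivAt_eq_neg_add ha (fun u => (le_abs_self _).trans (hM u))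
      (fun u hu => (le_abs_self _).trans (hgT u hu)) ht
  have hlower : -a t ≤ ε / 2 :=
    le_of_hasDerivAt_eq_neg_add (g := -g) (fun u => by simpa [add_comm] using (ha u).fun_neg)
      (fun u => (neg_le_abs _).trans (hM u)) (fun u hu => (neg_le_abs _).trans (hgT u hu)) ht
  rw [Real.dist_eq, sub_zero, abs_lt]
  constructor <;> linarith

lemma Monotone.bddBelow_range_of_add {p q : ℝ → ℝ} (hp : Monotone p) (hq : Monotone q)
    (hpq : BddBelow (range (p + q))) : BddBelow (range p) := by
  obtain ⟨B, hB⟩ := hpq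
  refine ⟨min (p 0) (B - q 0), forall_mem_range.2 fun t => ?_⟩
  rcases le_total t 0 with ht | ht
  · have hsum : B ≤ p t + q t := hB (mem_range_self t)
    exact (min_le_right _ _).trans (by linarith [hq ht])
  · exact (min_le_left _ _).trans (hp ht)

lemma exists_tendsto_atBot_of_abs_deriv_le {f f' h h' : ℝ → ℝ} {l : ℝ}
    (hf : ∀ t, HasDerivAt f (f' t) t) (hh : ∀ t, HasDerivAt h (h' t) t)
    (hle : ∀ t, |f' t| ≤ h' t) (hl : Tendsto h atBot (𝓝 l)) :
    ∃ m, Tendsto f atBot (𝓝 m) := by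
  have hp : Monotone fun t => h t + f t :=
    monotone_of_hasDerivAt_nonneg (fun t => (hh t).fun_add (hf t))
      fun t => show 0 ≤ h' t + f' t by linarith [neg_abs_le (f' t), hle t]
  have hq : Monotone fun t => h t - f t :=
    monotone_of_hasDerivAt_nonneg (fun t => (hh t).fun_sub (hf t))
      fun t => show 0 ≤ h' t - f' t by linarith [le_abs_self (f' t), hle t]
  have hh_ge : ∀ t, l ≤ h t :=
    (monotone_of_hasDerivAt_nonneg hh fun t => (abs_nonneg _).trans (hle t)).le_of_tendsto hl
  have hsum : BddBelow (range ((h + f) + (h - f))) :=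
    ⟨2 * l, forall_mem_range.2 fun t => show 2 * l ≤ (h t + f t) + (h t - f t) by
      linarith [hh_ge t]⟩
  have hp_lim := tendsto_atBot_ciInf hp (hp.bddBelow_range_of_add hq hsum)
  have hq_lim := tendsto_atBot_ciInf hq (hq.bddBelow_range_of_add hp (add_comm (h + f) _ ▸ hsum))
  exact ⟨_, ((hp_lim.sub hq_lim).div_const 2).congr fun t => by ring⟩

lemma tendsto_atBot_zero_of_hasDerivAt_sin_sq {ζ : ℝ → ℝ}
    (hζ : ∀ t, HasDerivAt ζ (sin (ζ t) ^ 2) t) (h₀ : ζ 0 ∈ Ico 0 π) :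
    Tendsto ζ atBot (𝓝 0) := by
  have hnonneg : ∀ t, 0 ≤ ζ t :=
    le_of_hasDerivAt_of_lipschitzWith lipschitzWith_sin_sq (by simp) hζ h₀.1
  have hmono : Monotone ζ := monotone_of_hasDerivAt_nonneg hζ fun t => sq_nonneg _
  have hL := tendsto_atBot_ciInf hmono ⟨0, forall_mem_range.2 hnonneg⟩
  set L := ⨅ t, ζ t
  have hsin_sq : sin L ^ 2 ≤ 0 :=
    nonpos_of_tendsto_atBot_of_tendsto_deriv hζ hL ((continuous_sin.tendsto L).comp hL |>.pow 2)
  have hL_nonneg : 0 ≤ L := ge_of_tendsto' hL hnonneg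
  have hL_lt : L < π := (hmono.le_of_tendsto hL 0).trans_lt h₀.2
  convert hL
  by_contra! hL_ne
  have := sin_pos_of_pos_of_lt_pi (hL_nonneg.lt_of_ne hL_ne) hL_lt
  nlinarith

theorem stmt1_general (β : ℝ)
    (a ζ θ : ℝ → ℝ)
    (ha : Differentiable ℝ a) (hζ : Differentiable ℝ ζ) (hθ : Differentiable ℝ θ)
    (hda : ∀ t, deriv a t = -a t + β ^ 2 * sin (ζ t) ^ 2 * sin (θ t))
    (hdζ : ∀ t, deriv ζ t = sin (ζ t) ^ 2)
    (hdθ : ∀ t, deriv θ t = a t)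
    (hbound : ∀ t, |a t| ≤ 2)
    (hζ0 : ζ 0 ∈ Set.Ico (0 : ℝ) π) :
    ∃ θstar : ℝ,
      Tendsto (fun t => (a t, ζ t, θ t)) atBot (nhds ((0 : ℝ), (0 : ℝ), θstar)) := by
  have haD : ∀ t, HasDerivAt a (-a t + β ^ 2 * sin (ζ t) ^ 2 * sin (θ t)) t :=
    fun t => hda t ▸ (ha t).hasDerivAt
  have hζD : ∀ t, HasDerivAt ζ (sin (ζ t) ^ 2) t := fun t => hdζ t ▸ (hζ t).hasDerivAt
  have hθD : ∀ t, HasDerivAt θ (a t) t := fun t => hdθ t ▸ (hθ t).hasDerivAt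
  have hζ_lim := tendsto_atBot_zero_of_hasDerivAt_sin_sq hζD hζ0
  have hforcing_le : ∀ t, |β ^ 2 * sin (ζ t) ^ 2 * sin (θ t)| ≤ β ^ 2 * sin (ζ t) ^ 2 := fun t => by
    rw [abs_mul, abs_of_nonneg (by positivity)]
    exact mul_le_of_le_one_right (by positivity) (abs_sin_le_one _)
  have hforcing_lim : Tendsto (fun t => β ^ 2 * sin (ζ t) ^ 2) atBot (𝓝 0) := by
    simpa using ((continuous_sin.tendsto 0).comp hζ_lim).pow 2 |>.const_mul (β ^ 2)
  have ha_lim : Tendsto a atBot (𝓝 0) :=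
    tendsto_atBot_zero_of_hasDerivAt_eq_neg_add haD hbound
      (squeeze_zero_norm hforcing_le hforcing_lim)
  obtain ⟨θstar, hθa_lim⟩ := exists_tendsto_atBot_of_abs_deriv_le
    (fun t => (hθD t).add (haD t)) (fun t => (hζD t).const_mul (β ^ 2))
    (fun t => by simpa using hforcing_le t) (by simpa using hζ_lim.const_mul (β ^ 2))
  refine ⟨θstar, ha_lim.prodMk_nhds (hζ_lim.prodMk_nhds ?_)⟩
  simpa using hθa_lim.sub ha_lim

/-- Property (2) of Lemma 5.1: a full bounded orbit of (5.1) with `ζ 0 ∈ [0, π)`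
converges in backward time to a fixed point `(0, 0, θ*)` on the circle `Γ`. -/
theorem stmt1 (β : ℝ) (hβ : β ∈ Set.Icc (0 : ℝ) 1)
    (a ζ θ : ℝ → ℝ)
    (ha : Differentiable ℝ a) (hζ : Differentiable ℝ ζ) (hθ : Differentiable ℝ θ)
    (hda : ∀ t, deriv a t = -a t + β ^ 2 * sin (ζ t) ^ 2 * sin (θ t))
    (hdζ : ∀ t, deriv ζ t = sin (ζ t) ^ 2)
    (hdθ : ∀ t, deriv θ t = a t)
    (hbound : ∀ t, |a t| ≤ 2)
    (hζ0 : ζ 0 ∈ Set.Ico (0 : ℝ) π) :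
    ∃ θstar : ℝ,
      Tendsto (fun t => (a t, ζ t, θ t)) atBot (nhds ((0 : ℝ), (0 : ℝ), θstar)) :=
  stmt1_general β a ζ θ ha hζ hθ hda hdζ hdθ hbound hζ0
end

section
/- Let β ∈ [0,1] and let (a, ζ, θ) : ℝ → ℝ³ be a differentiable function satisfying a'(t) = -a(t) + β² sin²(ζ(t)) sin(θ(t)), ζ'(t) = sin²(ζ(t)), θ'(t) = a(t) for all t. Define u(t) = a(t) - sin²(ζ(t)) and v(t) = a(t) + sin²(ζ(t)). Then for every t with ζ(t) ∈ [0, π/2], one has u'(t) ≤ -u(t) and v'(t) ≥ -v(t). -/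
open Real

/-!
Since `ζ' = sin² ζ ≥ 0`, the function `g = sin² ζ` has `g' = sin (2ζ) · sin² ζ`, which is
nonnegative while `ζ ∈ [0, π/2]`. The forcing term of `a' = -a + f` satisfies `|f| ≤ g` because
`β² ≤ 1`, so `(a - g)' = -a + f - g' ≤ -(a - g)` and `(a + g)' = -a + f + g' ≥ -(a + g)`.
-/

lemma deriv_sub_le_and_deriv_add_ge {a g : ℝ → ℝ} {t f g' : ℝ}
    (ha : HasDerivAt a (-a t + f) t) (hg : HasDerivAt g g' t)
    (hf : |f| ≤ g t) (hg' : 0 ≤ g') :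
    deriv (fun s => a s - g s) t ≤ -(a t - g t) ∧
      deriv (fun s => a s + g s) t ≥ -(a t + g t) := by
  rw [(ha.fun_sub hg).deriv, (ha.fun_add hg).deriv]
  obtain ⟨hf_lower, hf_upper⟩ := abs_le.mp hf
  constructor <;> linarith

lemma HasDerivAt.sin_sq {ζ : ℝ → ℝ} {ζ' t : ℝ} (hζ : HasDerivAt ζ ζ' t) :
    HasDerivAt (fun s => Real.sin (ζ s) ^ 2) (Real.sin (2 * ζ t) * ζ') t :=
  (hζ.sin.fun_pow 2).congr_deriv (by rw [Real.sin_two_mul]; ring)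

lemma sin_two_mul_nonneg_of_mem_Icc {x : ℝ} (hx : x ∈ Set.Icc 0 (π / 2)) :
    0 ≤ sin (2 * x) :=
  sin_nonneg_of_nonneg_of_le_pi (by linarith [hx.1]) (by linarith [hx.2])

lemma abs_mul_mul_sin_le {c w : ℝ} (hc : |c| ≤ 1) (hw : 0 ≤ w) (y : ℝ) :
    |c * w * sin y| ≤ w :=
  calc |c * w * sin y| = |c| * w * |sin y| := by rw [abs_mul, abs_mul, abs_of_nonneg hw]
    _ ≤ 1 * w * 1 := by gcongr; exact abs_sin_le_one y
    _ = w := by ring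

theorem stmt3_general (β : ℝ) (hβ : β ∈ Set.Icc (0 : ℝ) 1)
    (a ζ θ : ℝ → ℝ)
    (ha : Differentiable ℝ a) (hζ : Differentiable ℝ ζ)
    (hda : ∀ t, deriv a t = -a t + β ^ 2 * sin (ζ t) ^ 2 * sin (θ t))
    (hdζ : ∀ t, deriv ζ t = sin (ζ t) ^ 2) :
    ∀ t, ζ t ∈ Set.Icc (0 : ℝ) (π / 2) →
      deriv (fun s => a s - sin (ζ s) ^ 2) t ≤ -(a t - sin (ζ t) ^ 2) ∧
      deriv (fun s => a s + sin (ζ s) ^ 2) t ≥ -(a t + sin (ζ t) ^ 2) := by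
  intro t ht
  have hβ_sq : |β ^ 2| ≤ 1 := by
    rw [abs_of_nonneg (sq_nonneg β)]
    exact pow_le_one₀ hβ.1 hβ.2
  have ha_t : HasDerivAt a (-a t + β ^ 2 * sin (ζ t) ^ 2 * sin (θ t)) t :=
    hda t ▸ (ha t).hasDerivAt
  have hζ_t : HasDerivAt ζ (sin (ζ t) ^ 2) t := hdζ t ▸ (hζ t).hasDerivAt
  exact deriv_sub_le_and_deriv_add_ge ha_t hζ_t.sin_sq
    (abs_mul_mul_sin_le hβ_sq (sq_nonneg _) (θ t))
    (mul_nonneg (sin_two_mul_nonneg_of_mem_Icc ht) (sq_nonneg _))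

/-- The differential-inequality step in the proof of property (1) of Lemma 5.1:
`u = a - sin² ζ` satisfies `u' ≤ -u` and `v = a + sin² ζ` satisfies `v' ≥ -v`
whenever `ζ(t) ∈ [0, π/2]`. -/
theorem stmt3 (β : ℝ) (hβ : β ∈ Set.Icc (0 : ℝ) 1)
    (a ζ θ : ℝ → ℝ)
    (ha : Differentiable ℝ a) (hζ : Differentiable ℝ ζ) (hθ : Differentiable ℝ θ)
    (hda : ∀ t, deriv a t = -a t + β ^ 2 * sin (ζ t) ^ 2 * sin (θ t))
    (hdζ : ∀ t, deriv ζ t = sin (ζ t) ^ 2)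
    (hdθ : ∀ t, deriv θ t = a t) :
    ∀ t, ζ t ∈ Set.Icc (0 : ℝ) (π / 2) →
      deriv (fun s => a s - sin (ζ s) ^ 2) t ≤ -(a t - sin (ζ t) ^ 2) ∧
      deriv (fun s => a s + sin (ζ s) ^ 2) t ≥ -(a t + sin (ζ t) ^ 2) :=
  stmt3_general β hβ a ζ θ ha hζ hda hdζ
end
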